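/- Composability of Poly-typable Terms: Let t be a closed term that is poly-typable by A->B with respect to two closed terms s and s' of type A, and let t' be a closed term that is poly-typable by B->C with respect to the two closed terms t s and t s'. Then fn x=>(t'(t x)) is poly-typable by A->C with respect to s and s'. -/

import Mathlib

/-! Linear λ-calculus preamble -/

/-- Types of the linear λ-calculus: type variables, tensor product, linear implication. -/
inductive Ty : Type
  | tvar : ℕ → Ty
  | tensor : Ty → Ty → Ty
  | arrow : Ty → Ty → Ty
deriving DecidableEq

/-- Terms of the linear λ-calculus. -/
inductive Tm : Type
  | var : ℕ → Tm
  | app : Tm → Tm → Tm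
  | lam : ℕ → Tm → Tm
  | pair : Tm → Tm → Tm
  | letp : ℕ → ℕ → Tm → Tm → Tm
deriving DecidableEq

/-- Free variables of a term. -/
def Tm.fv : Tm → Finset ℕ
  | .var x => {x}
  | .app t s => t.fv ∪ s.fv
  | .lam x t => t.fv \ {x}
  | .pair t s => t.fv ∪ s.fv
  | .letp x y s t => s.fv ∪ (t.fv \ {x, y})

/-- Substitution of a term for a variable. -/
def Tm.subst : Tm → ℕ → Tm → Tm
  | .var y, x, s => if y = x then s else .var y
  | .app t u, x, s => .app (t.subst x s) (u.subst x s)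
  | .lam y t, x, s => if y = x then .lam y t else .lam y (t.subst x s)
  | .pair t u, x, s => .pair (t.subst x s) (u.subst x s)
  | .letp y z u t, x, s =>
      .letp y z (u.subst x s) (if x = y ∨ x = z then t else t.subst x s)

/-- Typing contexts: finite lists of typed variables. -/
abbrev Ctxt := List (ℕ × Ty)

/-- The linear type assignment system. -/
inductive Typed : Ctxt → Tm → Ty → Prop
  | var (x : ℕ) (A : Ty) : Typed [(x, A)] (.var x) A
  | exch (Γ Δ : Ctxt) (x y : ℕ) (A B : Ty) (t : Tm) (C : Ty) :
      Typed (Γ ++ (x, A) :: (y, B) :: Δ) t C →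
      Typed (Γ ++ (y, B) :: (x, A) :: Δ) t C
  | lam (x : ℕ) (A : Ty) (Γ : Ctxt) (t : Tm) (B : Ty) :
      Typed ((x, A) :: Γ) t B → Typed Γ (.lam x t) (.arrow A B)
  | app (Γ Δ : Ctxt) (t s : Tm) (A B : Ty) :
      Typed Γ t (.arrow A B) → Typed Δ s A → Typed (Γ ++ Δ) (.app t s) B
  | pair (Γ Δ : Ctxt) (s t : Tm) (A B : Ty) :
      Typed Γ s A → Typed Δ t B → Typed (Γ ++ Δ) (.pair s t) (.tensor A B)
  | letp (Γ Δ : Ctxt) (s t : Tm) (x y : ℕ) (A B C : Ty) :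
      Typed Γ s (.tensor A B) → Typed ((x, A) :: (y, B) :: Δ) t C →
      Typed (Γ ++ Δ) (.letp x y s t) C

/-- One-hole contexts. -/
inductive Cx : Type
  | hole : Cx
  | appL : Cx → Tm → Cx
  | appR : Tm → Cx → Cx
  | pairL : Cx → Tm → Cx
  | pairR : Tm → Cx → Cx
  | lam : ℕ → Cx → Cx
  | letL : ℕ → ℕ → Cx → Tm → Cx
  | letR : ℕ → ℕ → Tm → Cx → Cx

/-- Plugging a term into a one-hole context. -/
def Cx.plug : Cx → Tm → Tm
  | .hole, u => u
  | .appL C t, u => .app (C.plug u) t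
  | .appR t C, u => .app t (C.plug u)
  | .pairL C t, u => .pair (C.plug u) t
  | .pairR t C, u => .pair t (C.plug u)
  | .lam x C, u => .lam x (C.plug u)
  | .letL x y C t, u => .letp x y (C.plug u) t
  | .letR x y t C, u => .letp x y t (C.plug u)

/-- Variables captured by a context. -/
def Cx.cv : Cx → Finset ℕ
  | .hole => ∅
  | .appL C _ => C.cv
  | .appR _ C => C.cv
  | .pairL C _ => C.cv
  | .pairR _ C => C.cv
  | .lam x C => insert x C.cv
  | .letL _ _ C _ => C.cv
  | .letR x y _ C => insert x (insert y C.cv)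

/-- Free variables of a context. -/
def Cx.fv : Cx → Finset ℕ
  | .hole => ∅
  | .appL C t => C.fv ∪ t.fv
  | .appR t C => t.fv ∪ C.fv
  | .pairL C t => C.fv ∪ t.fv
  | .pairR t C => t.fv ∪ C.fv
  | .lam x C => C.fv \ {x}
  | .letL x y C t => C.fv ∪ (t.fv \ {x, y})
  | .letR x y t C => t.fv ∪ (C.fv \ {x, y})

/-- The base βη-reduction rules. -/
inductive StepBase : Tm → Tm → Prop
  | beta1 (x : ℕ) (t s : Tm) : StepBase (.app (.lam x t) s) (t.subst x s)
  | beta2 (x y : ℕ) (u v w : Tm) :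
      StepBase (.letp x y (.pair u v) w) ((w.subst x u).subst y v)
  | eta1 (x : ℕ) (t : Tm) : x ∉ t.fv → StepBase (.lam x (.app t (.var x))) t
  | eta2 (x y : ℕ) (t : Tm) : x ≠ y → x ∉ t.fv → y ∉ t.fv →
      StepBase (.letp x y t (.pair (.var x) (.var y))) t

/-- Closure of a relation under arbitrary one-hole contexts. -/
def Congr (R : Tm → Tm → Prop) (t u : Tm) : Prop :=
  ∃ (C : Cx) (a b : Tm), R a b ∧ t = C.plug a ∧ u = C.plug b

/-- One-step βη-reduction (congruent closure of the base rules): →βη. -/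
def Step : Tm → Tm → Prop := Congr StepBase

/-- The base commutative conversion rule ↔c. -/
def CommBase (t u : Tm) : Prop :=
  ∃ (C : Cx) (x y : ℕ) (s w : Tm),
    x ∉ C.fv ∧ y ∉ C.fv ∧ (∀ z ∈ C.cv, z ∉ s.fv) ∧
    t = C.plug (.letp x y s w) ∧ u = .letp x y s (C.plug w)

/-- The congruent equivalence relation =c generated by ↔c. -/
def Ceq : Tm → Tm → Prop := Relation.EqvGen (Congr CommBase)

/-- One-step reduction modulo commutative conversion: →βηc. -/
def StepC (t u : Tm) : Prop := ∃ t' u', Ceq t t' ∧ Step t' u' ∧ Ceq u' u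

/-- The equality =βηc : the least congruent equivalence relation containing ↔c and →βηc. -/
def BEqc : Tm → Tm → Prop :=
  Relation.EqvGen (Congr (fun a b => CommBase a b ∨ StepC a b))

/-- Type substitutions and their action on types. -/
def Ty.subst : Ty → (ℕ → Ty) → Ty
  | .tvar a, θ => θ a
  | .tensor A B, θ => .tensor (A.subst θ) (B.subst θ)
  | .arrow A B, θ => .arrow (A.subst θ) (B.subst θ)

/-- Action of a type substitution on a typing context. -/
def CtxtSubst (Γ : Ctxt) (θ : ℕ → Ty) : Ctxt := Γ.map (fun p => (p.1, p.2.subst θ))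

/-- `A` is the principal type of the closed term `t`. -/
def IsPT (t : Tm) (A : Ty) : Prop :=
  Typed [] t A ∧ ∀ A', Typed [] t A' → ∃ θ, A' = A.subst θ

/-- Iterated linear implication `A1->...->An->B`. -/
def arrows (As : List Ty) (B : Ty) : Ty := As.foldr .arrow B

/-- Iterated application `t s1 ⋯ sn`. -/
def apps (t : Tm) (ss : List Tm) : Tm := ss.foldl .app t

/-- `t` is poly-typable by `A1->...->An->B` with respect to closed terms `s1,...,sn`
of types `A1,...,An`. -/
def PolyTypableN (t : Tm) (As : List Ty) (B : Ty) (ss : List Tm) : Prop :=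
  (∃ (As' : List Ty) (B' : Ty), As'.length = As.length ∧ Typed [] t (arrows As' B')) ∧
  List.Forall₂ (fun s A => Typed [] s A) ss As ∧
  ∃ (θ : ℕ → Ty) (PTt : Ty) (As'' : List Ty),
    IsPT t PTt ∧ PTt.subst θ = arrows As'' B ∧
    List.Forall₂ (fun s A'' => ∃ P, IsPT s P ∧ P.subst θ = A'') ss As''


/-! The typings of `fn x => t' (t x)` are exactly the types `X -> Z` obtained from the solutions
of the equations `Pt = X -> Y`, `Pt' = Y -> Z`, where `Pt`, `Pt'` are principal types of `t`,
`t'` with their variables renamed apart. Solvable equations have a most general unifier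
(Robinson), and it yields a principal type of the composition. Poly-typability of `t'` with
respect to `t s` provides a type `B₀` of `t s` and hence a typing `t : A₀ -> B₀`, `s : A₀`, which
together with `t' : B₀ -> C` solves the equations; the same solution, extended to a renamed copy
of the principal type of `s`, instantiates both principal types as required. -/

namespace Ty

def vars : Ty → Finset ℕ
  | tvar a => {a}
  | tensor A B | arrow A B => A.vars ∪ B.vars

def size : Ty → ℕ
  | tvar _ => 1
  | tensor A B | arrow A B => A.size + B.size + 1

theorem size_pos (u : Ty) : 0 < u.size := by
  cases u <;> simp [size]

theorem subst_subst (u : Ty) (f g : ℕ → Ty) :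
    (u.subst f).subst g = u.subst fun b => (f b).subst g := by
  induction u with
  | tvar => rfl
  | tensor A B ihA ihB | arrow A B ihA ihB => simp [subst, ihA, ihB]

theorem subst_tvar (u : Ty) : u.subst tvar = u := by
  induction u with
  | tvar => rfl
  | tensor A B ihA ihB | arrow A B ihA ihB => simp [subst, ihA, ihB]

theorem subst_congr {u : Ty} {f g : ℕ → Ty} (h : ∀ a ∈ u.vars, f a = g a) :
    u.subst f = u.subst g := by
  induction u with
  | tvar a => exact h a (by simp [vars])
  | tensor A B ihA ihB | arrow A B ihA ihB =>
    simp only [vars, Finset.mem_union] at h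
    simp [subst, ihA fun a ha => h a (.inl ha), ihB fun a ha => h a (.inr ha)]

theorem size_le_size_subst {a : ℕ} {u : Ty} (f : ℕ → Ty) (h : a ∈ u.vars) :
    (f a).size ≤ (u.subst f).size := by
  induction u with
  | tvar b => simp only [vars, Finset.mem_singleton] at h; subst h; exact le_rfl
  | tensor A B ihA ihB | arrow A B ihA ihB =>
    simp only [vars, Finset.mem_union] at h
    rcases h with h | h
    · have := ihA h; simp only [subst, size]; omega
    · have := ihB h; simp only [subst, size]; omega

theorem notMem_vars_of_eq_subst {σ : ℕ → Ty} {a : ℕ} {T : Ty} (h : σ a = T.subst σ)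
    (hT : T ≠ tvar a) : a ∉ T.vars := by
  intro ha
  cases T with
  | tvar b => simp_all [vars]
  | tensor A B | arrow A B =>
    simp only [vars, Finset.mem_union] at ha
    rcases ha with ha | ha
    · have := size_le_size_subst σ ha; simp only [h, subst, size] at this; omega
    · have := size_le_size_subst σ ha; simp only [h, subst, size] at this; omega

theorem vars_subst_update_subset {a : ℕ} {T : Ty} (ha : a ∉ T.vars) (u : Ty) :
    (u.subst (Function.update tvar a T)).vars ⊆ (u.vars ∪ T.vars).erase a := by
  induction u with
  | tvar b =>
    by_cases hb : b = a
    · subst hb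
      simp only [subst, Function.update_self]
      intro c hc
      exact Finset.mem_erase.2 ⟨fun h => ha (h ▸ hc), Finset.mem_union_right _ hc⟩
    · simp [subst, vars, hb]
  | tensor A B ihA ihB | arrow A B ihA ihB =>
    simp only [subst, vars, Finset.union_subset_iff]
    exact ⟨ihA.trans (Finset.erase_subset_erase _ (by intro; simp; tauto)),
      ihB.trans (Finset.erase_subset_erase _ (by intro; simp; tauto))⟩

end Ty

section Unification

def Unifies (σ : ℕ → Ty) (l : List (Ty × Ty)) : Prop :=
  ∀ p ∈ l, p.1.subst σ = p.2.subst σ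

/-- Most general in the strong (idempotent) sense: every unifier `τ` factors as `μ`
followed by `τ` itself. -/
def IsMGU (μ : ℕ → Ty) (l : List (Ty × Ty)) : Prop :=
  Unifies μ l ∧ ∀ τ, Unifies τ l → ∀ b, τ b = (μ b).subst τ

def constraintVars : List (Ty × Ty) → Finset ℕ
  | [] => ∅
  | (u, v) :: l => u.vars ∪ v.vars ∪ constraintVars l

def constraintSize : List (Ty × Ty) → ℕ
  | [] => 0
  | (u, v) :: l => u.size + v.size + constraintSize l

def substConstraints (θ : ℕ → Ty) (l : List (Ty × Ty)) : List (Ty × Ty) :=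
  l.map fun p => (p.1.subst θ, p.2.subst θ)

theorem unifies_cons {σ : ℕ → Ty} {u v : Ty} {l : List (Ty × Ty)} :
    Unifies σ ((u, v) :: l) ↔ u.subst σ = v.subst σ ∧ Unifies σ l := by
  simp [Unifies]

theorem unifies_substConstraints {τ θ : ℕ → Ty} {l : List (Ty × Ty)} :
    Unifies τ (substConstraints θ l) ↔ Unifies (fun b => (θ b).subst τ) l := by
  simp only [Unifies, substConstraints, List.forall_mem_map, Ty.subst_subst]

theorem IsMGU.of_unifies_iff {μ : ℕ → Ty} {l l' : List (Ty × Ty)}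
    (h : ∀ σ, Unifies σ l ↔ Unifies σ l') (hμ : IsMGU μ l) : IsMGU μ l' :=
  ⟨(h μ).1 hμ.1, fun τ hτ => hμ.2 τ ((h τ).2 hτ)⟩

theorem isMGU_nil : IsMGU Ty.tvar [] :=
  ⟨by simp [Unifies], fun _ _ _ => rfl⟩

theorem update_subst_eq {τ : ℕ → Ty} {a : ℕ} {T : Ty} (h : τ a = T.subst τ) :
    (fun b => (Function.update Ty.tvar a T b).subst τ) = τ := by
  funext b
  by_cases hb : b = a
  · subst hb; simp [h]
  · simp [Function.update_of_ne hb, Ty.subst]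

theorem IsMGU.cons_elim {μ : ℕ → Ty} {a : ℕ} {T : Ty} {l : List (Ty × Ty)} (ha : a ∉ T.vars)
    (hμ : IsMGU μ (substConstraints (Function.update Ty.tvar a T) l)) :
    IsMGU (fun b => (Function.update Ty.tvar a T b).subst μ) ((Ty.tvar a, T) :: l) := by
  have hT : T.subst (Function.update Ty.tvar a T) = T :=
    (Ty.subst_congr fun b hb => Function.update_of_ne (ne_of_mem_of_not_mem hb ha) _ _).trans
      T.subst_tvar
  refine ⟨unifies_cons.2 ⟨?_, unifies_substConstraints.1 hμ.1⟩, fun τ hτ b => ?_⟩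
  · simp [Ty.subst, ← Ty.subst_subst, hT]
  · obtain ⟨hτa, hτl⟩ := unifies_cons.1 hτ
    have hτμ := hμ.2 τ (unifies_substConstraints.2 (by rwa [update_subst_eq hτa]))
    rw [Ty.subst_subst, ← funext hτμ]
    exact (congrFun (update_subst_eq hτa) b).symm

theorem constraintVars_substConstraints_update_subset {a : ℕ} {T : Ty} (ha : a ∉ T.vars)
    (l : List (Ty × Ty)) :
    constraintVars (substConstraints (Function.update Ty.tvar a T) l) ⊆
      (constraintVars l ∪ T.vars).erase a := by
  induction l with
  | nil => simp [substConstraints, constraintVars]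
  | cons p l ih =>
    simp only [substConstraints, List.map_cons, constraintVars, Finset.union_subset_iff] at ih ⊢
    refine ⟨⟨?_, ?_⟩, ih.trans (Finset.erase_subset_erase _ ?_)⟩
    · refine (Ty.vars_subst_update_subset ha _).trans (Finset.erase_subset_erase _ ?_)
      intro; simp; tauto
    · refine (Ty.vars_subst_update_subset ha _).trans (Finset.erase_subset_erase _ ?_)
      intro; simp; tauto
    · intro; simp; tauto

theorem card_constraintVars_substConstraints_lt {a : ℕ} {T : Ty} (ha : a ∉ T.vars)
    (l : List (Ty × Ty)) :
    (constraintVars (substConstraints (Function.update Ty.tvar a T) l)).card <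
      (constraintVars ((Ty.tvar a, T) :: l)).card := by
  have hmem : a ∈ constraintVars ((Ty.tvar a, T) :: l) := by simp [constraintVars, Ty.vars]
  refine (Finset.card_le_card ?_).trans_lt (Finset.card_erase_lt_of_mem hmem)
  refine (constraintVars_substConstraints_update_subset ha l).trans
    (Finset.erase_subset_erase _ ?_)
  intro; simp [constraintVars]; tauto

theorem constraintVars_cons_swap (u v : Ty) (l : List (Ty × Ty)) :
    constraintVars ((u, v) :: l) = constraintVars ((v, u) :: l) := by
  simp only [constraintVars, Finset.union_comm u.vars]

theorem constraintMeasure_lt {l l' : List (Ty × Ty)}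
    (hvars : constraintVars l' ⊆ constraintVars l) (hsize : constraintSize l' < constraintSize l) :
    Prod.Lex (· < ·) (· < ·) ((constraintVars l').card, constraintSize l')
      ((constraintVars l).card, constraintSize l) := by
  rcases (Finset.card_le_card hvars).lt_or_eq with h | h
  · exact .left _ _ h
  · rw [h]; exact .right _ hsize

end Unification

theorem exists_isMGU (l : List (Ty × Ty)) (hl : ∃ σ, Unifies σ l) : ∃ μ, IsMGU μ l := by
  match l, hl with
  | [], _ => exact ⟨Ty.tvar, isMGU_nil⟩
  | (u, v) :: l, ⟨σ, hσ⟩ =>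
    obtain ⟨huv, hl⟩ := unifies_cons.1 hσ
    by_cases heq : u = v
    · subst heq
      obtain ⟨μ, hμ⟩ := exists_isMGU l ⟨σ, hl⟩
      exact ⟨μ, hμ.of_unifies_iff fun τ => by simp [unifies_cons]⟩
    match u, v with
    | .tvar a, T =>
      have ha := Ty.notMem_vars_of_eq_subst huv (Ne.symm heq)
      obtain ⟨μ, hμ⟩ := exists_isMGU (substConstraints (Function.update Ty.tvar a T) l)
        ⟨σ, unifies_substConstraints.2 (by rwa [update_subst_eq huv])⟩
      exact ⟨_, hμ.cons_elim ha⟩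
    | T, .tvar a =>
      have ha := Ty.notMem_vars_of_eq_subst huv.symm heq
      obtain ⟨μ, hμ⟩ := exists_isMGU (substConstraints (Function.update Ty.tvar a T) l)
        ⟨σ, unifies_substConstraints.2 (by rwa [update_subst_eq huv.symm])⟩
      exact ⟨_, (hμ.cons_elim ha).of_unifies_iff fun τ => by simp [unifies_cons, eq_comm]⟩
    | .tensor A B, .tensor A' B' =>
      obtain ⟨μ, hμ⟩ := exists_isMGU ((A, A') :: (B, B') :: l)
        ⟨σ, by simp_all [unifies_cons, Ty.subst]⟩
      exact ⟨μ, hμ.of_unifies_iff fun τ => by simp [unifies_cons, Ty.subst, and_assoc]⟩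
    | .arrow A B, .arrow A' B' =>
      obtain ⟨μ, hμ⟩ := exists_isMGU ((A, A') :: (B, B') :: l)
        ⟨σ, by simp_all [unifies_cons, Ty.subst]⟩
      exact ⟨μ, hμ.of_unifies_iff fun τ => by simp [unifies_cons, Ty.subst, and_assoc]⟩
    | .tensor _ _, .arrow _ _ => simp [Ty.subst] at huv
    | .arrow _ _, .tensor _ _ => simp [Ty.subst] at huv
termination_by ((constraintVars l).card, constraintSize l)
decreasing_by
  · refine constraintMeasure_lt ?_ ?_
    · intro; simp [constraintVars]; tauto
    · have := u.size_pos; simp only [constraintSize]; omega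
  · exact .left _ _ (card_constraintVars_substConstraints_lt ha l)
  · rw [constraintVars_cons_swap]
    exact .left _ _ (card_constraintVars_substConstraints_lt ha l)
  all_goals
    refine constraintMeasure_lt ?_ ?_
    · intro; simp [constraintVars, Ty.vars]; tauto
    · simp only [constraintSize, Ty.size]; omega

namespace Typed

theorem subst {Γ : Ctxt} {u : Tm} {T : Ty} (h : Typed Γ u T) (θ : ℕ → Ty) :
    Typed (CtxtSubst Γ θ) u (T.subst θ) := by
  induction h with
  | var x A => exact .var x _
  | exch Γ Δ x y A B t C _ ih =>
    simp only [CtxtSubst, List.map_append, List.map_cons] at ih ⊢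
    exact .exch _ _ _ _ _ _ _ _ ih
  | lam x A Γ t B _ ih => exact .lam _ _ _ _ _ ih
  | app Γ Δ t s A B _ _ ih₁ ih₂ =>
    rw [CtxtSubst, List.map_append]
    exact .app _ _ _ _ _ _ ih₁ ih₂
  | pair Γ Δ s t A B _ _ ih₁ ih₂ =>
    rw [CtxtSubst, List.map_append]
    exact .pair _ _ _ _ _ _ ih₁ ih₂
  | letp Γ Δ s t x y A B C _ _ ih₁ ih₂ =>
    rw [CtxtSubst, List.map_append]
    exact .letp _ _ _ _ _ _ _ _ _ ih₁ ih₂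

theorem var_inv {Γ : Ctxt} {x : ℕ} {T : Ty} (h : Typed Γ (.var x) T) : Γ = [(x, T)] := by
  generalize hu : Tm.var x = u at h
  induction h with
  | var => cases hu; rfl
  | exch Γ Δ _ _ _ _ _ _ _ ih =>
    have := congrArg List.length (ih hu)
    simp at this
    omega
  | _ => cases hu

theorem app_inv {Γ : Ctxt} {u v : Tm} {T : Ty} (h : Typed Γ (.app u v) T) :
    ∃ Γ₁ Γ₂ A, (Γ₁ ++ Γ₂).Perm Γ ∧ Typed Γ₁ u (.arrow A T) ∧ Typed Γ₂ v A := by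
  generalize hw : Tm.app u v = w at h
  induction h with
  | app Γ Δ _ _ A _ h₁ h₂ => cases hw; exact ⟨Γ, Δ, A, .refl _, h₁, h₂⟩
  | exch Γ Δ _ _ _ _ _ _ _ ih =>
    obtain ⟨Γ₁, Γ₂, A, hp, h₁, h₂⟩ := ih hw
    exact ⟨Γ₁, Γ₂, A, hp.trans (.append_left Γ (.swap _ _ _)), h₁, h₂⟩
  | _ => cases hw

theorem lam_inv {Γ : Ctxt} {x : ℕ} {u : Tm} {T : Ty} (h : Typed Γ (.lam x u) T) :
    ∃ A B Γ', Γ'.Perm Γ ∧ T = .arrow A B ∧ Typed ((x, A) :: Γ') u B := by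
  generalize hw : Tm.lam x u = w at h
  induction h with
  | lam _ A Γ _ B h => cases hw; exact ⟨A, B, Γ, .refl _, rfl, h⟩
  | exch Γ Δ _ _ _ _ _ _ _ ih =>
    obtain ⟨A, B, Γ', hp, hT, h⟩ := ih hw
    exact ⟨A, B, Γ', hp.trans (.append_left Γ (.swap _ _ _)), hT, h⟩
  | _ => cases hw

theorem app_nil_inv {u v : Tm} {T : Ty} (h : Typed [] (.app u v) T) :
    ∃ A, Typed [] u (.arrow A T) ∧ Typed [] v A := by
  obtain ⟨Γ₁, Γ₂, A, hp, h₁, h₂⟩ := h.app_inv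
  obtain ⟨rfl, rfl⟩ := List.append_eq_nil_iff.1 hp.eq_nil
  exact ⟨A, h₁, h₂⟩

end Typed

theorem typed_comp_iff {t t' : Tm} {x : ℕ} {T : Ty} :
    Typed [] (.lam x (.app t' (.app t (.var x)))) T ↔
      ∃ A B C, T = .arrow A C ∧ Typed [] t (.arrow A B) ∧ Typed [] t' (.arrow B C) := by
  constructor
  · intro h
    obtain ⟨A, C, Γ, hΓ, rfl, hbody⟩ := h.lam_inv
    obtain rfl := hΓ.eq_nil
    obtain ⟨Γ₁, Γ₂, B, hp, ht', htx⟩ := hbody.app_inv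
    obtain ⟨Γ₃, Γ₄, A', hp', ht, hx⟩ := htx.app_inv
    obtain rfl := hx.var_inv
    have hlen := hp.length_eq
    have hlen' := hp'.length_eq
    simp only [List.length_append, List.length_cons, List.length_nil] at hlen hlen'
    obtain rfl : Γ₁ = [] := List.eq_nil_of_length_eq_zero (by omega)
    obtain rfl : Γ₃ = [] := List.eq_nil_of_length_eq_zero (by omega)
    obtain ⟨-, rfl⟩ := Prod.mk.inj (List.singleton_perm_singleton.1 (hp'.trans (by simpa using hp)))
    exact ⟨A', B, C, rfl, ht, ht'⟩
  · rintro ⟨A, B, C, rfl, ht, ht'⟩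
    have htx : Typed [(x, A)] (.app t (.var x)) B := ht.app _ _ _ _ _ _ (.var x A)
    exact .lam _ _ _ _ _ (ht'.app _ _ _ _ _ _ htx)

section PrincipalType

/-- `Nat.pair` splits the type variables into disjoint blocks, used to rename types apart. -/
def blockVar (i b : ℕ) : Ty := .tvar (Nat.pair i b)

def blockSubst (ξ : ℕ → ℕ → Ty) (n : ℕ) : Ty := ξ n.unpair.1 n.unpair.2

@[simp]
theorem blockSubst_pair (ξ : ℕ → ℕ → Ty) (i b : ℕ) : blockSubst ξ (Nat.pair i b) = ξ i b := by
  simp [blockSubst]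

theorem subst_blockVar_subst_blockSubst (u : Ty) (ξ : ℕ → ℕ → Ty) (i : ℕ) :
    (u.subst (blockVar i)).subst (blockSubst ξ) = u.subst (ξ i) := by
  simp [Ty.subst_subst, blockVar, Ty.subst]

theorem IsPT.subst_blockVar {u : Tm} {P : Ty} (h : IsPT u P) (i : ℕ) :
    IsPT u (P.subst (blockVar i)) := by
  refine ⟨h.1.subst _, fun A hA => ?_⟩
  obtain ⟨θ, rfl⟩ := h.2 A hA
  exact ⟨blockSubst fun _ => θ, (subst_blockVar_subst_blockSubst P (fun _ => θ) i).symm⟩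

/-- Typing `fn x => t' (t x)` at `X -> Z` means solving `Pt = X -> Y` and `Pt' = Y -> Z`, where
the variables of the principal types `Pt`, `Pt'` of `t`, `t'` are renamed apart (blocks 0 and 1)
and `X`, `Y`, `Z` are fresh (block 2). -/
def compConstraints (Pt Pt' : Ty) : List (Ty × Ty) :=
  [(Pt.subst (blockVar 0), .arrow (blockVar 2 0) (blockVar 2 1)),
   (Pt'.subst (blockVar 1), .arrow (blockVar 2 1) (blockVar 2 2))]

variable {t t' : Tm} {x : ℕ} {Pt Pt' : Ty}

theorem unifies_compConstraints_iff {τ : ℕ → Ty} :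
    Unifies τ (compConstraints Pt Pt') ↔
      Pt.subst (fun b => τ (Nat.pair 0 b)) = .arrow (τ (Nat.pair 2 0)) (τ (Nat.pair 2 1)) ∧
      Pt'.subst (fun b => τ (Nat.pair 1 b)) = .arrow (τ (Nat.pair 2 1)) (τ (Nat.pair 2 2)) := by
  simp [compConstraints, Unifies, Ty.subst_subst, blockVar, Ty.subst]

theorem typed_comp_iff_unifies (hPt : IsPT t Pt) (hPt' : IsPT t' Pt') {T : Ty} :
    Typed [] (.lam x (.app t' (.app t (.var x)))) T ↔
      ∃ τ, Unifies τ (compConstraints Pt Pt') ∧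
        T = .arrow (τ (Nat.pair 2 0)) (τ (Nat.pair 2 2)) := by
  rw [typed_comp_iff]
  constructor
  · rintro ⟨A, B, C, rfl, ht, ht'⟩
    obtain ⟨ξ, hξ⟩ := hPt.2 _ ht
    obtain ⟨ξ', hξ'⟩ := hPt'.2 _ ht'
    refine ⟨blockSubst fun | 0 => ξ | 1 => ξ' | _ => (fun | 0 => A | 1 => B | _ => C), ?_, by simp⟩
    exact unifies_compConstraints_iff.2 ⟨by simpa using hξ.symm, by simpa using hξ'.symm⟩
  · rintro ⟨τ, hτ, rfl⟩
    obtain ⟨h, h'⟩ := unifies_compConstraints_iff.1 hτ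
    exact ⟨_, _, _, rfl, h ▸ hPt.1.subst _, h' ▸ hPt'.1.subst _⟩

theorem isPT_comp (hPt : IsPT t Pt) (hPt' : IsPT t' Pt') {μ : ℕ → Ty}
    (hμ : IsMGU μ (compConstraints Pt Pt')) :
    IsPT (.lam x (.app t' (.app t (.var x)))) (.arrow (μ (Nat.pair 2 0)) (μ (Nat.pair 2 2))) := by
  refine ⟨(typed_comp_iff_unifies hPt hPt').2 ⟨μ, hμ.1, rfl⟩, fun T hT => ?_⟩
  obtain ⟨τ, hτ, rfl⟩ := (typed_comp_iff_unifies hPt hPt').1 hT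
  exact ⟨τ, by simp only [Ty.subst, ← hμ.2 τ hτ]⟩

end PrincipalType

theorem PolyTypableN.comp {t t' s : Tm} {A B C : Ty} (ht : PolyTypableN t [A] B [s])
    (ht' : PolyTypableN t' [B] C [.app t s]) (x : ℕ) :
    PolyTypableN (.lam x (.app t' (.app t (.var x)))) [A] C [s] := by
  obtain ⟨-, hsA, -, Pt, -, hPt, -, _ | ⟨⟨Ps, hPs, -⟩, -⟩⟩ := ht
  obtain ⟨-, -, θ, Pt', -, hPt', hθ, _ | ⟨⟨P₁, hP₁, rfl⟩, _ | _⟩⟩ := ht'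
  replace hθ : Pt'.subst θ = .arrow (P₁.subst θ) C := hθ
  obtain ⟨A₀, htA, hsA₀⟩ := (hP₁.1.subst θ).app_nil_inv
  obtain ⟨ζ, hζ⟩ := hPt.2 _ htA
  obtain ⟨ζ', hζ'⟩ := hPs.2 _ hsA₀
  have ht'B : Typed [] t' (.arrow (P₁.subst θ) C) := hθ ▸ hPt'.1.subst θ
  -- block 3 carries an instance of the principal type of `s`, renamed apart from the rest
  let τ := blockSubst fun
    | 0 => ζ | 1 => θ | 2 => (fun | 0 => A₀ | 1 => P₁.subst θ | _ => C) | _ => ζ'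
  have hτ : Unifies τ (compConstraints Pt Pt') :=
    unifies_compConstraints_iff.2 ⟨by simpa [τ] using hζ.symm, by simpa [τ] using hθ⟩
  obtain ⟨μ, hμ⟩ := exists_isMGU _ ⟨τ, hτ⟩
  refine ⟨⟨[A₀], C, rfl, typed_comp_iff.2 ⟨A₀, _, C, rfl, htA, ht'B⟩⟩, hsA, τ, _, [A₀],
    isPT_comp hPt hPt' hμ, ?_, .cons ⟨Ps.subst (blockVar 3), hPs.subst_blockVar 3, ?_⟩ .nil⟩
  · simp [Ty.subst, arrows, ← hμ.2 τ hτ, τ]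
  · rw [subst_blockVar_subst_blockSubst]
    exact hζ'.symm

theorem polytypable_composition_general (A B C : Ty) (t t' s s' : Tm)
    (ht1 : PolyTypableN t [A] B [s]) (ht2 : PolyTypableN t [A] B [s'])
    (ht'1 : PolyTypableN t' [B] C [Tm.app t s]) (ht'2 : PolyTypableN t' [B] C [Tm.app t s'])
    (x : ℕ) :
    PolyTypableN (.lam x (.app t' (.app t (.var x)))) [A] C [s] ∧
    PolyTypableN (.lam x (.app t' (.app t (.var x)))) [A] C [s'] :=
  ⟨ht1.comp ht'1 x, ht2.comp ht'2 x⟩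

/-- **Composability of Poly-typable Terms.** If `t` is poly-typable by `A->B` with
respect to closed terms `s` and `s'` of type `A`, and `t'` is poly-typable by `B->C`
with respect to `t s` and `t s'`, then `fn x=>(t'(t x))` is poly-typable by `A->C`
with respect to `s` and `s'`. -/
theorem polytypable_composition (A B C : Ty) (t t' s s' : Tm)
    (hs : Typed [] s A) (hs' : Typed [] s' A)
    (ht1 : PolyTypableN t [A] B [s]) (ht2 : PolyTypableN t [A] B [s'])
    (ht'1 : PolyTypableN t' [B] C [Tm.app t s]) (ht'2 : PolyTypableN t' [B] C [Tm.app t s'])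
    (x : ℕ) :
    PolyTypableN (.lam x (.app t' (.app t (.var x)))) [A] C [s] ∧
    PolyTypableN (.lam x (.app t' (.app t (.var x)))) [A] C [s'] :=
  polytypable_composition_general A B C t t' s s' ht1 ht2 ht'1 ht'2 x
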